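/- arXiv:2503.14052 — 3 statements merged into one kernel-verified Lean document; each statement's English description precedes it below -/
import Mathlib

section
/- A subgroup H of ℤ_p^× is open if and only if H is infinite. Equivalently: every infinite closed subgroup of ℤ_p^× is open. -/
/-!
If `g ∈ H` is congruent to `1` modulo exactly `p ^ m` with `m ≥ 1`, then, `p` being odd, lifting
the exponent shows that `g ^ p ^ j` is congruent to `1` modulo exactly `p ^ (m + j)`; its powers
therefore meet every class of `1 + p ^ (m + j) ℤ_p` modulo `p ^ (m + j + 1)`. Successive
approximation puts `1 + p ^ m ℤ_p`, an open subgroup, inside the closure of the powers of `g`.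
An infinite `H` contains such a `g ≠ 1` by pigeonhole modulo `p`. Conversely, `1` is not isolated
in `ℤ_p^×`, so open subgroups are infinite.
-/

open Topology

theorem Subgroup.exists_ne_one_mem_ker_of_infinite {G M : Type*} [Group G] [Group M] [Finite M]
    (f : G →* M) {H : Subgroup G} (hH : (H : Set G).Infinite) :
    ∃ g ∈ H, g ≠ 1 ∧ g ∈ f.ker := by
  obtain ⟨x, hx, y, hy, hxy, hf⟩ :=
    hH.exists_ne_map_eq_of_mapsTo (Set.mapsTo_univ f _) Set.finite_univ
  exact ⟨x / y, H.div_mem hx hy, div_ne_one.mpr hxy, by rw [MonoidHom.mem_ker, map_div, hf, div_self']⟩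

namespace PadicInt

variable {p : ℕ} [Fact p.Prime]

theorem nhds_hasBasis_pow_dvd_sub (y : ℤ_[p]) :
    (𝓝 y).HasBasis (fun _ : ℕ => True) (fun n => {z | (p : ℤ_[p]) ^ n ∣ z - y}) := by
  have hp : (1 : ℝ) < p := mod_cast (Fact.out : p.Prime).one_lt
  refine (Metric.nhds_basis_closedBall_pow (by positivity) (inv_lt_one_of_one_lt₀ hp)).congr
    (fun _ => Iff.rfl) fun n _ => ?_
  ext z
  rw [Metric.mem_closedBall, dist_eq_norm, inv_pow, ← zpow_natCast, ← zpow_neg,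
    norm_le_pow_iff_mem_span_pow, Ideal.mem_span_singleton, Set.mem_ofPred_eq]

theorem toZMod_eq_zero_iff_dvd {z : ℤ_[p]} : toZMod z = 0 ↔ (p : ℤ_[p]) ∣ z := by
  rw [← RingHom.mem_ker, ker_toZMod, maximalIdeal_eq_span_p, Ideal.mem_span_singleton]

variable (p) in
/-- The principal units `1 + p ^ k ℤ_p`, as the kernel of reduction modulo `p ^ k`. -/
noncomputable def principalUnits (k : ℕ) : Subgroup ℤ_[p]ˣ :=
  (Units.map (toZModPow k : ℤ_[p] →+* ZMod (p ^ k)).toMonoidHom).ker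

theorem div_mem_principalUnits_iff {k : ℕ} {u v : ℤ_[p]ˣ} :
    u / v ∈ principalUnits p k ↔ (p : ℤ_[p]) ^ k ∣ (u : ℤ_[p]) - v := by
  rw [principalUnits, MonoidHom.mem_ker, map_div, div_eq_one, Units.ext_iff, ← sub_eq_zero,
    Units.coe_map, Units.coe_map, RingHom.toMonoidHom_eq_coe, MonoidHom.coe_coe,
    ← map_sub, ← RingHom.mem_ker, ker_toZModPow, Ideal.mem_span_singleton]

theorem mem_principalUnits_iff {k : ℕ} {u : ℤ_[p]ˣ} :
    u ∈ principalUnits p k ↔ (p : ℤ_[p]) ^ k ∣ (u : ℤ_[p]) - 1 := by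
  simpa using div_mem_principalUnits_iff (k := k) (u := u) (v := 1)

theorem principalUnits_antitone : Antitone (principalUnits p) := fun _ _ hkl _ hu =>
  mem_principalUnits_iff.mpr ((pow_dvd_pow _ hkl).trans (mem_principalUnits_iff.mp hu))

theorem units_nhds_one_hasBasis :
    (𝓝 (1 : ℤ_[p]ˣ)).HasBasis (fun _ : ℕ => True) (fun k => principalUnits p k) := by
  rw [Units.isOpenEmbedding_val.isInducing.nhds_eq_comap]
  refine ((nhds_hasBasis_pow_dvd_sub _).comap _).congr (fun _ => Iff.rfl) fun k _ => ?_
  ext u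
  exact mem_principalUnits_iff.symm

instance units_nhdsNE_one_neBot : (𝓝[≠] (1 : ℤ_[p]ˣ)).NeBot := by
  refine ((nhdsWithin_hasBasis units_nhds_one_hasBasis _).neBot_iff).mpr fun {k} _ => ?_
  have hunit : IsUnit (1 - (p : ℤ_[p]) ^ (k + 1)) :=
    IsLocalRing.isUnit_one_sub_self_of_mem_nonunits _ <| mem_nonunits_iff.mpr <| by
      rw [isUnit_pow_iff k.succ_ne_zero]; exact prime_p.not_isUnit
  refine ⟨hunit.unit, mem_principalUnits_iff.mpr ⟨-p, by simp [pow_succ]⟩, fun h => ?_⟩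
  exact prime_p.ne_zero (by simpa using congrArg Units.val h)

theorem exists_pow_sub_dvd {x w : ℤ_[p]} {k : ℕ} (hk : 1 ≤ k)
    (hx : emultiplicity (p : ℤ_[p]) (x - 1) = k) (hw : (p : ℤ_[p]) ^ k ∣ w - 1) :
    ∃ t : ℕ, (p : ℤ_[p]) ^ (k + 1) ∣ x ^ t - w := by
  obtain ⟨⟨u, hu⟩, hpu⟩ := emultiplicity_eq_coe.mp hx
  have hu0 : toZMod u ≠ 0 := fun h =>
    hpu (hu ▸ pow_succ (p : ℤ_[p]) k ▸ mul_dvd_mul_left _ (toZMod_eq_zero_iff_dvd.mp h))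
  obtain ⟨c, hc⟩ := hw
  -- `t` solves `t * u ≡ c` modulo `p`
  set t := (toZMod c / toZMod u).val
  have htuc : (p : ℤ_[p]) ∣ t * u - c := toZMod_eq_zero_iff_dvd.mp <| by
    rw [map_sub, map_mul, map_natCast, ZMod.natCast_zmod_val, div_mul_cancel₀ _ hu0, sub_self]
  refine ⟨t, ?_⟩
  rw [eq_add_of_sub_eq' hu, eq_add_of_sub_eq' hc]
  have hsplit : (1 + (p : ℤ_[p]) ^ k * u) ^ t - (1 + p ^ k * c) =
      ((1 + p ^ k * u) ^ t - 1 ^ (t - 1) * (p ^ k * u) * t - 1 ^ t) + p ^ k * (t * u - c) := by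
    ring
  -- the first summand is divisible by `(p ^ k * u) ^ 2`, hence by `p ^ (k + 1)` as `k ≥ 1`
  rw [hsplit]
  refine dvd_add ((pow_dvd_pow _ (by omega : k + 1 ≤ k * 2)).trans ?_ |>.trans
    (sq_dvd_add_pow_sub_sub _ _ _)) (pow_succ (p : ℤ_[p]) k ▸ mul_dvd_mul_left _ htuc)
  rw [mul_pow, pow_mul]
  exact dvd_mul_right _ _

theorem exists_div_pow_mem_principalUnits {x w : ℤ_[p]ˣ} {k : ℕ} (hk : 1 ≤ k)
    (hx : emultiplicity (p : ℤ_[p]) ((x : ℤ_[p]) - 1) = k) (hw : w ∈ principalUnits p k) :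
    ∃ t : ℕ, w / x ^ t ∈ principalUnits p (k + 1) := by
  obtain ⟨t, ht⟩ := exists_pow_sub_dvd hk hx (mem_principalUnits_iff.mp hw)
  exact ⟨t, div_mem_principalUnits_iff.mpr (by rw [← dvd_neg, neg_sub]; exact_mod_cast ht)⟩

theorem exists_mem_div_mem_principalUnits (hp : Odd p) {H : Subgroup ℤ_[p]ˣ} {g : ℤ_[p]ˣ}
    (hg : g ∈ H) {m : ℕ} (hm : 1 ≤ m) (hgm : emultiplicity (p : ℤ_[p]) ((g : ℤ_[p]) - 1) = m)
    {y : ℤ_[p]ˣ} (hy : y ∈ principalUnits p m) (j : ℕ) :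
    ∃ h ∈ H, y / h ∈ principalUnits p (m + j) := by
  induction j with
  | zero => exact ⟨1, H.one_mem, by simpa using hy⟩
  | succ j ih =>
    obtain ⟨h, hh, hyh⟩ := ih
    have hgp : (p : ℤ_[p]) ∣ (g : ℤ_[p]) - 1 :=
      pow_one (p : ℤ_[p]) ▸ (pow_dvd_iff_le_emultiplicity.mpr (by rw [hgm]; exact_mod_cast hm))
    have hgj : emultiplicity (p : ℤ_[p]) (((g ^ p ^ j : ℤ_[p]ˣ) : ℤ_[p]) - 1) = (m + j : ℕ) := by
      have := emultiplicity_pow_prime_pow_sub_pow_prime_pow prime_p hp hgp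
        (fun h => prime_p.not_isUnit (isUnit_of_dvd_unit h g.isUnit)) j
      rw [one_pow, hgm] at this
      push_cast
      exact this
    obtain ⟨t, ht⟩ := exists_div_pow_mem_principalUnits (by omega) hgj hyh
    exact ⟨h * (g ^ p ^ j) ^ t, H.mul_mem hh (H.pow_mem (H.pow_mem hg _) _),
      by rwa [div_mul_eq_div_div]⟩

theorem principalUnits_le_of_isClosed (hp : Odd p) {H : Subgroup ℤ_[p]ˣ}
    (hH : IsClosed (H : Set ℤ_[p]ˣ)) {g : ℤ_[p]ˣ} (hg : g ∈ H) {m : ℕ} (hm : 1 ≤ m)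
    (hgm : emultiplicity (p : ℤ_[p]) ((g : ℤ_[p]) - 1) = m) : principalUnits p m ≤ H := by
  intro y hy
  rw [← SetLike.mem_coe, ← hH.closure_eq, mem_closure_iff_nhds_basis
    (units_nhds_one_hasBasis.nhds_of_one y)]
  intro k _
  obtain ⟨h, hh, hyh⟩ := exists_mem_div_mem_principalUnits hp hg hm hgm hy k
  refine ⟨h, hh, ?_⟩
  rw [Set.mem_ofPred_eq, ← inv_div]
  exact (principalUnits p k).inv_mem (principalUnits_antitone (by omega) hyh)

theorem exists_ne_one_mem_principalUnits {H : Subgroup ℤ_[p]ˣ} (hH : (H : Set ℤ_[p]ˣ).Infinite)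
    (k : ℕ) : ∃ g ∈ H, g ≠ 1 ∧ g ∈ principalUnits p k :=
  Subgroup.exists_ne_one_mem_ker_of_infinite _ hH

theorem exists_emultiplicity_sub_one_eq {g : ℤ_[p]ˣ} (hg : g ≠ 1) (hg1 : g ∈ principalUnits p 1) :
    ∃ m : ℕ, 1 ≤ m ∧ emultiplicity (p : ℤ_[p]) ((g : ℤ_[p]) - 1) = m := by
  have hfin : FiniteMultiplicity (p : ℤ_[p]) ((g : ℤ_[p]) - 1) :=
    .of_not_isUnit prime_p.not_isUnit (sub_ne_zero.mpr (Units.val_eq_one.not.mpr hg))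
  refine ⟨_, ?_, hfin.emultiplicity_eq_multiplicity⟩
  exact_mod_cast hfin.emultiplicity_eq_multiplicity ▸
    pow_dvd_iff_le_emultiplicity.mp (by simpa using mem_principalUnits_iff.mp hg1)

end PadicInt

/-- For an odd prime `p`, a closed subgroup of `ℤ_p^×` is open iff it is infinite. -/
theorem closed_subgroup_padic_units_open_iff_infinite (p : ℕ) [Fact p.Prime] (hp : Odd p)
    (H : Subgroup ℤ_[p]ˣ) (hH : IsClosed (H : Set ℤ_[p]ˣ)) :
    IsOpen (H : Set ℤ_[p]ˣ) ↔ (H : Set ℤ_[p]ˣ).Infinite := by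
  refine ⟨fun hO => infinite_of_mem_nhds 1 (hO.mem_nhds H.one_mem), fun hI => ?_⟩
  obtain ⟨g, hgH, hg, hg1⟩ := PadicInt.exists_ne_one_mem_principalUnits hI 1
  obtain ⟨m, hm, hgm⟩ := PadicInt.exists_emultiplicity_sub_one_eq hg hg1
  exact H.isOpen_of_mem_nhds (g := 1) <| PadicInt.units_nhds_one_hasBasis.mem_of_superset trivial
    (PadicInt.principalUnits_le_of_isClosed hp hH hgH hm hgm)
end

section
/- Let G be a compact p-adic Lie group Gal(𝕃/𝕂) for a Galois extension 𝕃/𝕂 with 𝕂 a number field, let τ ∈ Z(G) be a central element acting on all p-power roots of unity in 𝕃 by ζ ↦ ζ^g with a fixed integer g > 1, and let α ∈ 𝕃^× not a root of unity. Set β = τ(α)/α^g. Then: (1) β is not a root of unity; (2) h(β) ≤ (g+1)·h(α), where h is the absolute logarithmic Weil height. -/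
/-! If `β ^ n = 1` then `τ(α) ^ n = α ^ (g n)`; as `τ` preserves heights this gives
`n h(α) = g n h(α)`, so `h(α) = 0` and by Kronecker `α` is a root of unity (`α = 0` would give `β = 0`).
The height bound is the triangle inequality for `h(τ(α) · (α ^ g)⁻¹)`. -/

theorem height_div_pow_le {M : Type*} [DivisionMonoid M] (h : M → ℝ)
    (h_mul : ∀ x y : M, h (x * y) ≤ h x + h y) (h_inv : ∀ x : M, h x⁻¹ = h x)
    (h_pow : ∀ (x : M) (n : ℕ), h (x ^ n) = n * h x) (x y : M) (g : ℕ) :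
    h (x / y ^ g) ≤ h x + g * h y := by
  calc h (x / y ^ g) = h (x * (y ^ g)⁻¹) := by rw [div_eq_mul_inv]
    _ ≤ h x + h (y ^ g)⁻¹ := h_mul _ _
    _ = h x + g * h y := by rw [h_inv, h_pow]

theorem height_eq_zero_of_pow_eq_pow {M : Type*} [Monoid M] (h : M → ℝ)
    (h_pow : ∀ (x : M) (n : ℕ), h (x ^ n) = n * h x) {x y : M} (hxy : h y = h x)
    {m n : ℕ} (hmn : m ≠ n) (hpow : y ^ m = x ^ n) : h x = 0 := by
  have hm : (m : ℝ) * h x = n * h x := by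
    calc (m : ℝ) * h x = h (y ^ m) := by rw [h_pow, hxy]
      _ = n * h x := by rw [hpow, h_pow]
  have hmn' : (m : ℝ) - n ≠ 0 := sub_ne_zero.mpr (mod_cast hmn)
  have : ((m : ℝ) - n) * h x = 0 := by rw [sub_mul, hm, sub_self]
  exact (mul_eq_zero.mp this).resolve_left hmn'

theorem pow_eq_pow_mul_of_div_pow_pow_eq_one {G : Type*} [CommGroupWithZero G] {x y : G}
    {g n : ℕ} (hn : 0 < n) (hβ : (y / x ^ g) ^ n = 1) : y ^ n = x ^ (g * n) := by
  rcases eq_or_ne (x ^ g) 0 with hx | hx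
  · simp [hx, hn.ne'] at hβ
  · rwa [div_pow, div_eq_one_iff_eq (pow_ne_zero n hx), ← pow_mul] at hβ

theorem beta_not_root_of_unity_and_height_bound_general
    (L : Type*) [Field L] (h : L → ℝ)
    (h_mul : ∀ x y : L, h (x * y) ≤ h x + h y)
    (h_inv : ∀ x : L, h x⁻¹ = h x)
    (h_pow : ∀ (x : L) (n : ℕ), h (x ^ n) = n * h x)
    (h_aut : ∀ (σ : L ≃+* L) (x : L), h (σ x) = h x)
    (h_kron : ∀ x : L, h x = 0 ↔ x = 0 ∨ ∃ n : ℕ, 0 < n ∧ x ^ n = 1)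
    (τ : L ≃+* L) (g : ℕ) (hg : 1 < g)
    (α : L) (hαtors : ¬ ∃ n : ℕ, 0 < n ∧ α ^ n = 1) :
    (¬ ∃ n : ℕ, 0 < n ∧ (τ α / α ^ g) ^ n = 1) ∧
      h (τ α / α ^ g) ≤ ((g : ℝ) + 1) * h α := by
  refine ⟨?_, ?_⟩
  · rintro ⟨n, hn, hβ⟩
    have hgn : n ≠ g * n := (lt_mul_left hn hg).ne
    have hα : h α = 0 := height_eq_zero_of_pow_eq_pow h h_pow (h_aut τ α) hgn
      (pow_eq_pow_mul_of_div_pow_pow_eq_one hn hβ)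
    rcases (h_kron α).mp hα with rfl | hαtors'
    · simp [hn.ne', (zero_lt_one.trans hg).ne'] at hβ
    · exact hαtors hαtors'
  · calc h (τ α / α ^ g) ≤ h (τ α) + g * h α := height_div_pow_le h h_mul h_inv h_pow _ _ _
      _ = ((g : ℝ) + 1) * h α := by rw [h_aut]; ring

/-- Let `τ` be an automorphism acting as `ζ ↦ ζ^g` (`g > 1`) on `p`-power roots of unity,
`h` a height function with the standard properties of the absolute logarithmic Weil height,
and `α` a nonzero non-torsion element. Then `β = τ(α)/α^g` is not a root of unity and
`h(β) ≤ (g+1)·h(α)`. -/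
theorem beta_not_root_of_unity_and_height_bound (p : ℕ) [Fact p.Prime]
    (L : Type*) [Field L] (h : L → ℝ)
    (h_mul : ∀ x y : L, h (x * y) ≤ h x + h y)
    (h_inv : ∀ x : L, h x⁻¹ = h x)
    (h_pow : ∀ (x : L) (n : ℕ), h (x ^ n) = n * h x)
    (h_aut : ∀ (σ : L ≃+* L) (x : L), h (σ x) = h x)
    (h_kron : ∀ x : L, h x = 0 ↔ x = 0 ∨ ∃ n : ℕ, 0 < n ∧ x ^ n = 1)
    (τ : L ≃+* L) (g : ℕ) (hg : 1 < g)
    (hτ : ∀ ζ : L, (∃ k : ℕ, ζ ^ p ^ k = 1) → τ ζ = ζ ^ g)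
    (α : L) (hα0 : α ≠ 0) (hαtors : ¬ ∃ n : ℕ, 0 < n ∧ α ^ n = 1) :
    (¬ ∃ n : ℕ, 0 < n ∧ (τ α / α ^ g) ^ n = 1) ∧
      h (τ α / α ^ g) ≤ ((g : ℝ) + 1) * h α :=
  beta_not_root_of_unity_and_height_bound_general L h h_mul h_inv h_pow h_aut h_kron τ g hg α hαtors
end

section
/- Let 𝕃 be a field, τ an automorphism of 𝕃 with τ(ζ) = ζ^g for all p-power roots of unity ζ ∈ 𝕃, where g > 1 is an integer. Let α ∈ 𝕃^× be not a root of unity, β = τ(α)/α^g, and σ an automorphism of 𝕃 commuting with τ. If σ(β)/β is a p-power root of unity and σ(β) ≠ β, then a contradiction follows; i.e., for every automorphism σ of 𝕃 commuting with τ, if σ(β) ≠ β then σ(β)/β is not a p-power root of unity. (Key step: η = σ(α)/α satisfies g·h(η) = h(η), forcing η to be a root of unity; writing η = η₁η₂ with η₁ of p-power order and η₂ of order prime to p, one gets τ(η₁)/η₁^g = 1 and σ(β)/β = τ(η₂)/η₂^g has order prime to p.) -/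
/-!
Write `T x = τ x / x ^ g`, a multiplicative map commuting with every `σ` that commutes with `τ`;
then `σ β / β = T η` for `β = T α` and `η = σ α / α`. If `T η` has `p`-power order, then
`τ ζ = ζ ^ g` for a power `ζ` of `η`, so `h ζ = g * h ζ` forces `h ζ = 0` and `η` is a root of
unity. The `p`-part of `η` is killed by `T` by the hypothesis on `τ`, so `T η` also has order
prime to `p`, hence `T η = 1`.
-/

section TwistedRatio

variable {G F : Type*} [CommGroupWithZero G] [FunLike F G G] [MonoidWithZeroHomClass F G G]

def twistedRatio (τ : F) (g : ℕ) : G →*₀ G where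
  toFun x := τ x / x ^ g
  map_zero' := by simp
  map_one' := by simp
  map_mul' x y := by simp only [map_mul, mul_pow, div_mul_div_comm]

@[simp]
theorem twistedRatio_apply (τ : F) (g : ℕ) (x : G) : twistedRatio τ g x = τ x / x ^ g :=
  rfl

theorem twistedRatio_eq_one_iff {τ : F} {g : ℕ} {x : G} (hx : x ≠ 0) :
    twistedRatio τ g x = 1 ↔ τ x = x ^ g :=
  div_eq_one_iff_eq (pow_ne_zero g hx)

theorem map_twistedRatio_div_self {τ σ : F} (g : ℕ) (hcomm : ∀ x, σ (τ x) = τ (σ x)) (x : G) :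
    σ (twistedRatio τ g x) / twistedRatio τ g x = twistedRatio τ g (σ x / x) := by
  rw [map_div₀ (twistedRatio τ g)]
  simp [hcomm]

theorem twistedRatio_eq_one_of_isOfFinOrder {p : ℕ} (hp : p.Prime) {τ : F} {g : ℕ}
    (hτ : ∀ ζ : G, (∃ k : ℕ, ζ ^ p ^ k = 1) → τ ζ = ζ ^ g) {x : G} (hx : IsOfFinOrder x)
    {k : ℕ} (hk : twistedRatio τ g x ^ p ^ k = 1) : twistedRatio τ g x = 1 := by
  set n := orderOf x
  set m := ordCompl[p] n
  have hcop : (p ^ k).Coprime m := (Nat.coprime_ordCompl hp hx.orderOf_pos.ne').pow_left k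
  have hpart : (x ^ m) ^ p ^ n.factorization p = 1 := by
    rw [← pow_mul, mul_comm, Nat.ordProj_mul_ordCompl_eq_self, pow_orderOf_eq_one]
  refine (pow_eq_one_iff_of_coprime hcop).mp ⟨hk, ?_⟩
  rw [← map_pow, twistedRatio_eq_one_iff (pow_ne_zero m hx.isUnit.ne_zero)]
  exact hτ _ ⟨_, hpart⟩

end TwistedRatio

section Height

theorem height_eq_zero_of_map_eq_pow {M : Type*} [Monoid M] {h : M → ℝ}
    (h_pow : ∀ (x : M) (n : ℕ), h (x ^ n) = n * h x) {τ : M → M}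
    (h_aut : ∀ x, h (τ x) = h x) {g : ℕ} (hg : g ≠ 1) {x : M} (hx : τ x = x ^ g) :
    h x = 0 := by
  have hfix : (g : ℝ) * h x = 1 * h x := by rw [← h_pow, ← hx, h_aut, one_mul]
  exact (mul_eq_mul_right_iff.mp hfix).resolve_left (by exact_mod_cast hg)

variable {G F : Type*} [CommGroupWithZero G] [FunLike F G G] [MonoidWithZeroHomClass F G G]

theorem IsOfFinOrder.of_twistedRatio {h : G → ℝ}
    (h_pow : ∀ (x : G) (n : ℕ), h (x ^ n) = n * h x) {τ : F} (h_aut : ∀ x, h (τ x) = h x)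
    (h_kron : ∀ x, h x = 0 → x = 0 ∨ ∃ n : ℕ, 0 < n ∧ x ^ n = 1) {g : ℕ} (hg : g ≠ 1) {x : G}
    (hT : IsOfFinOrder (twistedRatio τ g x)) : IsOfFinOrder x := by
  obtain ⟨n, hn, hTn⟩ := hT.exists_pow_eq_one
  rw [← map_pow] at hTn
  have hxn : x ^ n ≠ 0 := by
    rintro h0
    rw [h0, map_zero] at hTn
    exact zero_ne_one hTn
  have hfix : τ (x ^ n) = (x ^ n) ^ g := (twistedRatio_eq_one_iff hxn).mp hTn
  obtain h0 | hfin := h_kron _ (height_eq_zero_of_map_eq_pow h_pow h_aut hg hfix)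
  · exact absurd h0 hxn
  · exact (isOfFinOrder_iff_pow_eq_one.mpr hfin).of_pow hn.ne'

end Height

theorem sigma_beta_ratio_not_p_power_root_general (p : ℕ) [Fact p.Prime]
    (L : Type*) [Field L] (h : L → ℝ)
    (h_pow : ∀ (x : L) (n : ℕ), h (x ^ n) = n * h x)
    (h_aut : ∀ (σ : L ≃+* L) (x : L), h (σ x) = h x)
    (h_kron : ∀ x : L, h x = 0 ↔ x = 0 ∨ ∃ n : ℕ, 0 < n ∧ x ^ n = 1)
    (τ : L ≃+* L) (g : ℕ) (hg : 1 < g)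
    (hτ : ∀ ζ : L, (∃ k : ℕ, ζ ^ p ^ k = 1) → τ ζ = ζ ^ g)
    (α : L)
    (σ : L ≃+* L) (hcomm : ∀ x : L, σ (τ x) = τ (σ x))
    (hne : σ (τ α / α ^ g) ≠ τ α / α ^ g) :
    ¬ ∃ k : ℕ, (σ (τ α / α ^ g) / (τ α / α ^ g)) ^ p ^ k = 1 := by
  rintro ⟨k, hk⟩
  have hβ0 : τ α / α ^ g ≠ 0 := by
    rintro h0
    simp [h0, (Fact.out : p.Prime).ne_zero] at hk
  have hratio : σ (τ α / α ^ g) / (τ α / α ^ g) = twistedRatio τ g (σ α / α) :=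
    map_twistedRatio_div_self g hcomm α
  rw [hratio] at hk
  have hη : IsOfFinOrder (σ α / α) :=
    .of_twistedRatio h_pow (h_aut τ) (fun x => (h_kron x).mp) hg.ne'
      (isOfFinOrder_iff_pow_eq_one.mpr ⟨p ^ k, pow_pos (Fact.out : p.Prime).pos k, hk⟩)
  have hfixed := twistedRatio_eq_one_of_isOfFinOrder Fact.out hτ hη hk
  exact hne ((div_eq_one_iff_eq hβ0).mp (hratio.trans hfixed))

/-- With `β = τ(α)/α^g` as in the central-element argument: for every automorphism `σ`
commuting with `τ`, if `σ(β) ≠ β` then `σ(β)/β` is not a `p`-power root of unity. -/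
theorem sigma_beta_ratio_not_p_power_root (p : ℕ) [Fact p.Prime]
    (L : Type*) [Field L] (h : L → ℝ)
    (h_mul : ∀ x y : L, h (x * y) ≤ h x + h y)
    (h_inv : ∀ x : L, h x⁻¹ = h x)
    (h_pow : ∀ (x : L) (n : ℕ), h (x ^ n) = n * h x)
    (h_aut : ∀ (σ : L ≃+* L) (x : L), h (σ x) = h x)
    (h_kron : ∀ x : L, h x = 0 ↔ x = 0 ∨ ∃ n : ℕ, 0 < n ∧ x ^ n = 1)
    (τ : L ≃+* L) (g : ℕ) (hg : 1 < g)
    (hτ : ∀ ζ : L, (∃ k : ℕ, ζ ^ p ^ k = 1) → τ ζ = ζ ^ g)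
    (α : L) (hα0 : α ≠ 0) (hαtors : ¬ ∃ n : ℕ, 0 < n ∧ α ^ n = 1)
    (σ : L ≃+* L) (hcomm : ∀ x : L, σ (τ x) = τ (σ x))
    (hne : σ (τ α / α ^ g) ≠ τ α / α ^ g) :
    ¬ ∃ k : ℕ, (σ (τ α / α ^ g) / (τ α / α ^ g)) ^ p ^ k = 1 :=
  sigma_beta_ratio_not_p_power_root_general p L h h_pow h_aut h_kron τ g hg hτ α σ hcomm hne
end
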